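/- Let λ_k be a real eigenvalue of the Sturm–Liouville problem with real eigenfunction y_k, and suppose y_{k+1} is an associated function: -y_{k+1}''+q y_{k+1} = λ_k y_{k+1} + y_k, y_{k+1}(0)cos β = y_{k+1}'(0) sin β, and (aλ_k+b)y_{k+1}(1) + a·y_k(1) = (cλ_k+d)y_{k+1}'(1) + c·y_k'(1). If cλ_k+d ≠ 0, then ∫₀¹ y_k(x)² dx = -(ad-bc)·y_k(1)² / (cλ_k+d)². -/

import Mathlib

open MeasureTheory Set

/-- Lemma 2.3(a): norm of the eigenfunction at a multiple eigenvalue `λk ≠ -d/c`. -/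
theorem norm_eigenfunction_multiple
    (a b c d β : ℝ) (habcd : a * d - b * c < 0) (hac : a * c ≠ 0)
    (hβ0 : 0 ≤ β) (hβπ : β < Real.pi)
    (q : ℝ → ℝ) (hq : ContinuousOn q (Icc (0:ℝ) 1))
    (lam : ℝ) (hcd : c * lam + d ≠ 0)
    (y0 y0' y0'' y1 y1' y1'' : ℝ → ℝ)
    (hy0 : ∀ x ∈ Icc (0:ℝ) 1, HasDerivAt y0 (y0' x) x)
    (hy0' : ∀ x ∈ Icc (0:ℝ) 1, HasDerivAt y0' (y0'' x) x)
    (hy0'' : ContinuousOn y0'' (Icc (0:ℝ) 1))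
    (hy1 : ∀ x ∈ Icc (0:ℝ) 1, HasDerivAt y1 (y1' x) x)
    (hy1' : ∀ x ∈ Icc (0:ℝ) 1, HasDerivAt y1' (y1'' x) x)
    (hy1'' : ContinuousOn y1'' (Icc (0:ℝ) 1))
    (hode0 : ∀ x ∈ Icc (0:ℝ) 1, -y0'' x + q x * y0 x = lam * y0 x)
    (hode1 : ∀ x ∈ Icc (0:ℝ) 1, -y1'' x + q x * y1 x = lam * y1 x + y0 x)
    (hbc00 : y0 0 * Real.cos β = y0' 0 * Real.sin β)
    (hbc01 : y1 0 * Real.cos β = y1' 0 * Real.sin β)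
    (hbc10 : (a * lam + b) * y0 1 = (c * lam + d) * y0' 1)
    (hbc11 : (a * lam + b) * y1 1 + a * y0 1 = (c * lam + d) * y1' 1 + c * y0' 1) :
    ∫ x in (0:ℝ)..1, (y0 x) ^ 2
      = -(a * d - b * c) * (y0 1) ^ 2 / (c * lam + d) ^ 2 := by
  set W : ℝ → ℝ := fun x => y0' x * y1 x - y0 x * y1' x with hWdef
  have hWd : ∀ x ∈ Icc (0:ℝ) 1, HasDerivAt W ((y0 x) ^ 2) x := by
    intro x hx
    have h := ((hy0' x hx).mul (hy1 x hx)).sub ((hy0 x hx).mul (hy1' x hx))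
    have e0 : y0'' x = q x * y0 x - lam * y0 x := by linarith [hode0 x hx]
    have e1 : y1'' x = q x * y1 x - lam * y1 x - y0 x := by linarith [hode1 x hx]
    refine h.congr_deriv ?_
    rw [e0, e1]; ring
  have hy0c : ContinuousOn y0 (Icc (0:ℝ) 1) := fun x hx =>
    (hy0 x hx).continuousAt.continuousWithinAt
  have hcont : ContinuousOn (fun x => (y0 x) ^ 2) (Icc (0:ℝ) 1) := hy0c.pow 2
  have h01 : (0:ℝ) ≤ 1 := by norm_num
  have key : ∫ x in (0:ℝ)..1, (y0 x) ^ 2 = W 1 - W 0 := by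
    apply intervalIntegral.integral_eq_sub_of_hasDerivAt
    · intro x hx
      exact hWd x (by simpa [uIcc_of_le h01] using hx)
    · exact (hcont.mono (by rw [uIcc_of_le h01])).intervalIntegrable
  have hW0 : W 0 = 0 := by
    rcases eq_or_ne (Real.sin β) 0 with hs | hs
    · have hc : Real.cos β ≠ 0 := by
        intro hcc
        have := Real.sin_sq_add_cos_sq β
        rw [hs, hcc] at this; norm_num at this
      have h0 : y0 0 = 0 := by
        have : y0 0 * Real.cos β = 0 := by rw [hbc00, hs, mul_zero]
        exact (mul_eq_zero.mp this).resolve_right hc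
      have h1 : y1 0 = 0 := by
        have : y1 0 * Real.cos β = 0 := by rw [hbc01, hs, mul_zero]
        exact (mul_eq_zero.mp this).resolve_right hc
      simp [hWdef, h0, h1]
    · have hmul : Real.sin β * W 0 = 0 := by
        simp only [hWdef]
        linear_combination y0 0 * hbc01 - y1 0 * hbc00
      exact (mul_eq_zero.mp hmul).resolve_left hs
  have hW1 : W 1 = -(a * d - b * c) * (y0 1) ^ 2 / (c * lam + d) ^ 2 := by
    have hD2 : ((c * lam + d) ^ 2) ≠ 0 := pow_ne_zero _ hcd
    simp only [hWdef]
    field_simp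
    linear_combination (c*lam+d)*y0 1 * hbc11 - ((c*lam+d)*y1 1 + c*y0 1) * hbc10
  rw [key, hW0, hW1, sub_zero]
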